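/- arXiv:1508.03228 — 2 statements merged into one kernel-verified Lean document; each statement's English description precedes it below -/
import Mathlib

section
/- Let k₂, k₃ ∈ ℝ and define vector fields f, g : ℝ⁴ → ℝ⁴ by f(x) = k₂ x₃ • (0, 0, −1, 1) + k₃ x₄ • (0, 1, 0, −1) and g(x) = x₁ x₂ • (−1, 0, 1, 0). Then for every x ∈ ℝ⁴, [f, g](x) = x₁ • (−k₃ x₄, 0, k₂ x₂ + k₃ x₄, −k₂ x₂). (Lie bracket computation for the consecutive reaction X₁ + X₂ → X₂ + X₃, X₃ → X₄, X₄ → X₂.) -/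
/-- The Lie bracket of two vector fields on `ℝ⁴`:
`[φ,ψ](x) = Dψ(x)(φ(x)) − Dφ(x)(ψ(x))`. -/
noncomputable def lieBracket (φ ψ : (Fin 4 → ℝ) → (Fin 4 → ℝ))
    (x : Fin 4 → ℝ) : Fin 4 → ℝ :=
  fderiv ℝ ψ x (φ x) - fderiv ℝ φ x (ψ x)

/-- Drift vector field `f(x) = k₂ x₃ • (0,0,−1,1) + k₃ x₄ • (0,1,0,−1)` of the
consecutive reaction `X₁ + X₂ → X₂ + X₃`, `X₃ → X₄`, `X₄ → X₂`. -/
noncomputable def drift (k₂ k₃ : ℝ) (x : Fin 4 → ℝ) : Fin 4 → ℝ :=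
  (k₂ * x 2) • ![0, 0, -1, 1] + (k₃ * x 3) • ![0, 1, 0, -1]

/-- Control vector field `g(x) = x₁ x₂ • (−1, 0, 1, 0)`. -/
noncomputable def ctrl (x : Fin 4 → ℝ) : Fin 4 → ℝ :=
  (x 0 * x 1) • ![-1, 0, 1, 0]

noncomputable def driftL (k₂ k₃ : ℝ) : (Fin 4 → ℝ) →L[ℝ] (Fin 4 → ℝ) :=
  (ContinuousLinearMap.proj 2 : (Fin 4 → ℝ) →L[ℝ] ℝ).smulRight (k₂ • ![0, 0, -1, 1])
    + (ContinuousLinearMap.proj 3 : (Fin 4 → ℝ) →L[ℝ] ℝ).smulRight (k₃ • ![0, 1, 0, -1])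

lemma driftL_apply (k₂ k₃ : ℝ) (x : Fin 4 → ℝ) :
    driftL k₂ k₃ x = drift k₂ k₃ x := by
  funext i
  fin_cases i <;>
    simp [driftL, drift, ContinuousLinearMap.smulRight_apply, smul_smul] <;> ring

lemma hasFDerivAt_drift (k₂ k₃ : ℝ) (x : Fin 4 → ℝ) :
    HasFDerivAt (drift k₂ k₃) (driftL k₂ k₃) x := by
  have h := (driftL k₂ k₃).hasFDerivAt (x := x)
  exact h.congr_of_eventuallyEq (Filter.Eventually.of_forall fun y => (driftL_apply k₂ k₃ y).symm)

noncomputable def ctrlL (x : Fin 4 → ℝ) : (Fin 4 → ℝ) →L[ℝ] (Fin 4 → ℝ) :=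
  ((x 0 • (ContinuousLinearMap.proj 1 : (Fin 4 → ℝ) →L[ℝ] ℝ)
    + x 1 • (ContinuousLinearMap.proj 0 : (Fin 4 → ℝ) →L[ℝ] ℝ)).smulRight ![-1, 0, 1, 0])

lemma hasFDerivAt_ctrl (x : Fin 4 → ℝ) :
    HasFDerivAt ctrl (ctrlL x) x := by
  have h0 : HasFDerivAt (fun y : Fin 4 → ℝ => y 0)
      (ContinuousLinearMap.proj 0 : (Fin 4 → ℝ) →L[ℝ] ℝ) x :=
    (ContinuousLinearMap.proj 0 : (Fin 4 → ℝ) →L[ℝ] ℝ).hasFDerivAt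
  have h1 : HasFDerivAt (fun y : Fin 4 → ℝ => y 1)
      (ContinuousLinearMap.proj 1 : (Fin 4 → ℝ) →L[ℝ] ℝ) x :=
    (ContinuousLinearMap.proj 1 : (Fin 4 → ℝ) →L[ℝ] ℝ).hasFDerivAt
  have hm := h0.mul h1
  have := hm.smul_const (![-1, 0, 1, 0] : Fin 4 → ℝ)
  exact this

/-- `[f, g](x) = x₁ • (−k₃ x₄, 0, k₂ x₂ + k₃ x₄, −k₂ x₂)` for every
`x ∈ ℝ⁴`. -/
theorem lieBracket_drift_ctrl (k₂ k₃ : ℝ) (x : Fin 4 → ℝ) :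
    lieBracket (drift k₂ k₃) ctrl x =
      x 0 • ![-(k₃ * x 3), 0, k₂ * x 1 + k₃ * x 3, -(k₂ * x 1)] := by
  have hf := hasFDerivAt_drift k₂ k₃ x
  have hg := hasFDerivAt_ctrl x
  unfold lieBracket
  rw [hf.fderiv, hg.fderiv]
  funext i
  fin_cases i <;>
    simp [ctrlL, driftL, drift, ctrl, ContinuousLinearMap.smulRight_apply,
      Matrix.cons_val_zero, Matrix.cons_val_one] <;> ring
end

section
/- Let k₂, k₃ ∈ ℝ with k₂ ≠ 0 and k₃ ≠ 0, and define vector fields f, g : ℝ⁴ → ℝ⁴ by f(x) = k₂ x₃ • (0, 0, −1, 1) + k₃ x₄ • (0, 1, 0, −1) and g(x) = x₁ x₂ • (−1, 0, 1, 0). Then for every x ∈ ℝ⁴ with x₁ ≠ 0 and x₂ ≠ 0, the three vectors g(x), [f, g](x), [f, [f, g]](x) are linearly independent, so their span has dimension 3 (which equals the rank of the stoichiometric matrix with columns (−1,0,1,0), (0,0,−1,1), (0,1,0,−1)). (The consecutive reaction X₁ + X₂ → X₂ + X₃, X₃ → X₄, X₄ → X₂ with the rate coefficient of its initializer as single control input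 is controllable at every point with x₁ ≠ 0 and x₂ ≠ 0.) -/
/-- The stoichiometric matrix with columns `(−1,0,1,0)`, `(0,0,−1,1)`, `(0,1,0,−1)`. -/
def stoich : Matrix (Fin 4) (Fin 3) ℝ :=
  Matrix.of ![![-1, 0, 0], ![0, 0, 1], ![1, -1, 0], ![0, 1, -1]]

/-! ### Auxiliary lemmas -/

/-- The `i`-th coordinate projection as a continuous linear map. -/
noncomputable def pr (i : Fin 4) : (Fin 4 → ℝ) →L[ℝ] ℝ := ContinuousLinearMap.proj i

lemma hasFDeriv_mul_smul (i j : Fin 4) (c : Fin 4 → ℝ) (x : Fin 4 → ℝ) :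
    HasFDerivAt (fun y : Fin 4 → ℝ => (y i * y j) • c)
      ((x i • pr j + x j • pr i).smulRight c) x :=
  (((hasFDerivAt_apply i x).mul (hasFDerivAt_apply j x))).smul_const c

lemma hasFDeriv_const_mul_smul (k : ℝ) (i : Fin 4) (c : Fin 4 → ℝ) (x : Fin 4 → ℝ) :
    HasFDerivAt (fun y : Fin 4 → ℝ => (k * y i) • c)
      ((k • pr i).smulRight c) x :=
  ((hasFDerivAt_apply i x).const_mul k).smul_const c

lemma drift_hasFDeriv (k₂ k₃ : ℝ) (x : Fin 4 → ℝ) :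
    HasFDerivAt (drift k₂ k₃)
      ((k₂ • pr 2).smulRight ![0,0,-1,1] + (k₃ • pr 3).smulRight ![0,1,0,-1]) x :=
  (hasFDeriv_const_mul_smul k₂ 2 _ x).add (hasFDeriv_const_mul_smul k₃ 3 _ x)

lemma ctrl_hasFDeriv (x : Fin 4 → ℝ) :
    HasFDerivAt ctrl ((x 0 • pr 1 + x 1 • pr 0).smulRight ![-1,0,1,0]) x :=
  hasFDeriv_mul_smul 0 1 _ x

lemma bracket1 (k₂ k₃ : ℝ) :
    lieBracket (drift k₂ k₃) ctrl =
      fun x => (x 0 * x 3) • ![-k₃, 0, k₃, 0] + (x 0 * x 1) • ![0, 0, k₂, -k₂] := by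
  funext x
  unfold lieBracket
  rw [(drift_hasFDeriv k₂ k₃ x).fderiv, (ctrl_hasFDeriv x).fderiv]
  funext i
  fin_cases i <;>
    simp [pr, drift, ctrl, Fin.sum_univ_four] <;> ring

lemma bracket2 (k₂ k₃ : ℝ) (x : Fin 4 → ℝ) :
    lieBracket (drift k₂ k₃) (lieBracket (drift k₂ k₃) ctrl) x =
      ![-(k₂*k₃*(x 0)*(x 2)) + k₃^2*(x 0)*(x 3),
        k₂*k₃*(x 0)*(x 1),
        k₂*k₃*(x 0)*(x 2) - k₃^2*(x 0)*(x 3) + 2*k₂*k₃*(x 0)*(x 3) + k₂^2*(x 0)*(x 1),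
        -(2*k₂*k₃*(x 0)*(x 3)) - k₂^2*(x 0)*(x 1) - k₂*k₃*(x 0)*(x 1)] := by
  have hD : HasFDerivAt (lieBracket (drift k₂ k₃) ctrl)
      ((x 0 • pr 3 + x 3 • pr 0).smulRight ![-k₃, 0, k₃, 0]
        + (x 0 • pr 1 + x 1 • pr 0).smulRight ![0, 0, k₂, -k₂]) x := by
    rw [bracket1]
    exact (hasFDeriv_mul_smul 0 3 _ x).add (hasFDeriv_mul_smul 0 1 _ x)
  rw [lieBracket, hD.fderiv, (drift_hasFDeriv k₂ k₃ x).fderiv, bracket1]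
  funext i
  fin_cases i <;>
    simp [pr, drift, Fin.sum_univ_four] <;> ring

lemma ctrl_val (x : Fin 4 → ℝ) :
    ctrl x = ![-(x 0 * x 1), 0, x 0 * x 1, 0] := by
  funext i; fin_cases i <;> simp [ctrl]

lemma b1val (k₂ k₃ : ℝ) (x : Fin 4 → ℝ) :
    lieBracket (drift k₂ k₃) ctrl x =
      ![-(k₃ * x 0 * x 3), 0, k₃ * x 0 * x 3 + k₂ * x 0 * x 1, -(k₂ * x 0 * x 1)] := by
  rw [bracket1]; funext i; fin_cases i <;> simp <;> ring

/-- for `k₂ ≠ 0`, `k₃ ≠ 0` and every `x` with `x₁ ≠ 0` and `x₂ ≠ 0`, the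
vectors `g(x), [f,g](x), [f,[f,g]](x)` are linearly independent, so their span has
dimension 3, which equals the rank of the stoichiometric matrix. -/
theorem brackets_linearIndependent (k₂ k₃ : ℝ) (hk₂ : k₂ ≠ 0) (hk₃ : k₃ ≠ 0)
    (x : Fin 4 → ℝ) (hx₁ : x 0 ≠ 0) (hx₂ : x 1 ≠ 0) :
    LinearIndependent ℝ
        ![ctrl x, lieBracket (drift k₂ k₃) ctrl x,
          lieBracket (drift k₂ k₃) (lieBracket (drift k₂ k₃) ctrl) x] ∧
    Module.finrank ℝ (Submodule.span ℝ
        {ctrl x, lieBracket (drift k₂ k₃) ctrl x,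
          lieBracket (drift k₂ k₃) (lieBracket (drift k₂ k₃) ctrl) x}) = 3 ∧
    stoich.rank = 3 := by
  have hli : LinearIndependent ℝ
      ![ctrl x, lieBracket (drift k₂ k₃) ctrl x,
        lieBracket (drift k₂ k₃) (lieBracket (drift k₂ k₃) ctrl) x] := by
    rw [Fintype.linearIndependent_iff]
    intro g hg
    have h1 := congrFun hg 1
    have h3 := congrFun hg 3
    have h0 := congrFun hg 0
    simp [Fin.sum_univ_three, ctrl_val, b1val, bracket2] at h1 h3 h0
    have hg2 : g 2 = 0 := by tauto
    rw [hg2] at h3 h0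
    have hg1 : g 1 = 0 := by
      have := mul_ne_zero (mul_ne_zero hk₂ hx₁) hx₂
      rcases mul_eq_zero.mp (by linarith : g 1 * (k₂ * x 0 * x 1) = 0) with h | h
      · exact h
      · exact absurd h (by rw [mul_assoc] at this ⊢; exact this)
    rw [hg1] at h0
    have hg0 : g 0 = 0 := by
      have := mul_ne_zero hx₁ hx₂
      rcases mul_eq_zero.mp (by linarith : g 0 * (x 0 * x 1) = 0) with h | h
      · exact h
      · exact absurd h this
    intro i
    fin_cases i <;> assumption
  refine ⟨hli, ?_, ?_⟩
  · have hcard := finrank_span_eq_card hli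
    have hr : Set.range
        ![ctrl x, lieBracket (drift k₂ k₃) ctrl x,
          lieBracket (drift k₂ k₃) (lieBracket (drift k₂ k₃) ctrl) x] =
        {ctrl x, lieBracket (drift k₂ k₃) ctrl x,
          lieBracket (drift k₂ k₃) (lieBracket (drift k₂ k₃) ctrl) x} := by
      ext v; simp [Matrix.range_cons]; tauto
    rw [hr] at hcard
    simpa using hcard
  · have hinj : Function.Injective stoich.mulVecLin := by
      rw [← LinearMap.ker_eq_bot, LinearMap.ker_eq_bot']
      intro v hv
      have h0 := congrFun hv 0
      have h1 := congrFun hv 1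
      have h2 := congrFun hv 2
      simp [stoich, Matrix.mulVecLin, Matrix.mulVec, dotProduct,
        Fin.sum_univ_three] at h0 h1 h2
      funext i
      fin_cases i <;> simp <;> linarith
    rw [Matrix.rank, LinearMap.finrank_range_of_inj hinj]
    simp
end
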